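/- Fix k₀ > 0 and a twice-differentiable trajectory g with g(0) = 0 and |g'| bounded by 1. Suppose the aperture phase Φ satisfies Φ'(ξ) = k₀·g'(z_c(ξ))/√(1 + g'(z_c(ξ))²), where z_c(ξ) is defined implicitly by g(z_c) = ξ + z_c·g'(z_c). Then |Φ'(ξ)| < k₀ for all ξ, and the nonparaxial ray x = ξ + z·Φ'(ξ)/√(k₀² - Φ'(ξ)²) launched from ξ is tangent to the curve x = g(z) at z = z_c(ξ). -/

import Mathlib

/-!
The launch wavenumber `p = k₀ m / √(1 + m²)` is the transverse component of a wave vector of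
length `k₀` whose direction has slope `m`. Hence `|p| < k₀`, the longitudinal component is
`√(k₀² - p²) = k₀ / √(1 + m²)`, and the ray slope `p / √(k₀² - p²)` recovers `m = g'(z_c)`.
The implicit equation for `z_c` then says exactly that the ray passes through `(z_c, g(z_c))`.
-/

open Real

lemma abs_mul_div_sqrt_one_add_sq_lt {k : ℝ} (hk : 0 < k) (m : ℝ) :
    |k * m / √(1 + m ^ 2)| < k := by
  have hs : 0 < √(1 + m ^ 2) := sqrt_pos.mpr (by positivity)
  have hm : |m| < √(1 + m ^ 2) := by
    rw [← sqrt_sq_eq_abs]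
    exact sqrt_lt_sqrt (sq_nonneg m) (lt_one_add _)
  rw [abs_div, abs_mul, abs_of_pos hk, abs_of_pos hs, div_lt_iff₀ hs]
  exact mul_lt_mul_of_pos_left hm hk

lemma sqrt_sq_sub_sq_mul_div_sqrt_one_add_sq {k : ℝ} (hk : 0 ≤ k) (m : ℝ) :
    √(k ^ 2 - (k * m / √(1 + m ^ 2)) ^ 2) = k / √(1 + m ^ 2) := by
  have h1 : (0 : ℝ) < 1 + m ^ 2 := by positivity
  have hsub : k ^ 2 - (k * m / √(1 + m ^ 2)) ^ 2 = (k / √(1 + m ^ 2)) ^ 2 := by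
    rw [div_pow, div_pow, sq_sqrt h1.le]
    field_simp
    ring
  rw [hsub, sqrt_sq (div_nonneg hk (sqrt_nonneg _))]

lemma mul_div_sqrt_one_add_sq_div_sqrt_sq_sub_sq {k : ℝ} (hk : 0 < k) (m : ℝ) :
    k * m / √(1 + m ^ 2) / √(k ^ 2 - (k * m / √(1 + m ^ 2)) ^ 2) = m := by
  have hs : 0 < √(1 + m ^ 2) := sqrt_pos.mpr (by positivity)
  rw [sqrt_sq_sub_sq_mul_div_sqrt_one_add_sq hk.le]
  field_simp

theorem nonparaxial_ray_tangent_general (k₀ : ℝ) (hk : 0 < k₀) (g : ℝ → ℝ)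
    (zc : ℝ → ℝ)
    (hzc : ∀ ξ : ℝ, g (zc ξ) = ξ + zc ξ * deriv g (zc ξ))
    (Φ : ℝ → ℝ)
    (hΦ : ∀ ξ : ℝ,
      deriv Φ ξ = k₀ * deriv g (zc ξ) / Real.sqrt (1 + (deriv g (zc ξ)) ^ 2)) :
    ∀ ξ : ℝ,
      |deriv Φ ξ| < k₀ ∧
      ξ + zc ξ * (deriv Φ ξ / Real.sqrt (k₀ ^ 2 - (deriv Φ ξ) ^ 2)) = g (zc ξ) ∧
      deriv Φ ξ / Real.sqrt (k₀ ^ 2 - (deriv Φ ξ) ^ 2) = deriv g (zc ξ) := by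
  intro ξ
  have hray_slope : deriv Φ ξ / √(k₀ ^ 2 - deriv Φ ξ ^ 2) = deriv g (zc ξ) := by
    rw [hΦ ξ, mul_div_sqrt_one_add_sq_div_sqrt_sq_sub_sq hk]
  refine ⟨hΦ ξ ▸ abs_mul_div_sqrt_one_add_sq_lt hk _, ?_, hray_slope⟩
  rw [hray_slope, hzc ξ]

/-- Nonparaxial trajectory engineering: if the aperture phase `Φ` satisfies
`Φ'(ξ) = k₀ g'(z_c(ξ))/√(1 + g'(z_c(ξ))²)`, with `z_c(ξ)` defined implicitly by
`g(z_c) = ξ + z_c g'(z_c)`, then `|Φ'(ξ)| < k₀` for all `ξ`, and the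
nonparaxial ray `x = ξ + z Φ'(ξ)/√(k₀² - Φ'(ξ)²)` launched from `ξ` is tangent
to the curve `x = g(z)` at `z = z_c(ξ)`. -/
theorem nonparaxial_ray_tangent (k₀ : ℝ) (hk : 0 < k₀) (g : ℝ → ℝ)
    (hg : ContDiff ℝ 2 g) (hg0 : g 0 = 0)
    (hslope : ∀ z : ℝ, |deriv g z| ≤ 1)
    (zc : ℝ → ℝ)
    (hzc : ∀ ξ : ℝ, g (zc ξ) = ξ + zc ξ * deriv g (zc ξ))
    (Φ : ℝ → ℝ)
    (hΦ : ∀ ξ : ℝ,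
      deriv Φ ξ = k₀ * deriv g (zc ξ) / Real.sqrt (1 + (deriv g (zc ξ)) ^ 2)) :
    ∀ ξ : ℝ,
      |deriv Φ ξ| < k₀ ∧
      ξ + zc ξ * (deriv Φ ξ / Real.sqrt (k₀ ^ 2 - (deriv Φ ξ) ^ 2)) = g (zc ξ) ∧
      deriv Φ ξ / Real.sqrt (k₀ ^ 2 - (deriv Φ ξ) ^ 2) = deriv g (zc ξ) :=
  nonparaxial_ray_tangent_general k₀ hk g zc hzc Φ hΦ
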